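/- Let α = p/2 for a positive integer p, λ > 0, τ ∈ (0,1), and let X be a strictly positive random variable. Let (Z₁,...,Z_p) be independent standard Gaussians independent of X. Then the gamma smart path X_τ satisfies X_τ = Σ_{i=1}^p (√τ·√(X/p) + √((1-τ)/(2λ))·Z_i)² in distribution. -/

import Mathlib

/-!
Both laws are concentrated on `[0, ∞)`, where a finite measure is determined by its Laplace
transform at the integers: the powers of `exp (-x)` span a point-separating algebra of bounded
continuous functions on `[0, ∞)`. The smart path is a convolution, so its transform at `t` is
the product of the Gamma(`α`, `λ`) factor `(λ / (λ + t (1 - τ)))^α` and the transform of the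
Poisson–gamma mixture, which the Poisson generating function turns into
`E exp (-t τ λ X / (λ + t (1 - τ)))`. Conditionally on `X`, the sum of squares has the `p`-th
power of the one-dimensional noncentral chi-squared transform
`(1 + 2tc²)^(-1/2) exp (-t a² / (1 + 2tc²))` with `a² = τX/p` and `c² = (1 - τ)/(2λ)`,
which is the same expression for `α = p/2`.
-/

open MeasureTheory ProbabilityTheory Real Set Filter Topology

noncomputable section

/-- Law of the Poisson–gamma mixture `Y(τ, X, λ)`: given `X = x`, draw
`K ~ Poisson(xλτ/(1-τ))`, then `Y ~ Gamma(K, λτ/(1-τ))` (`Y = 0` if `K = 0`). -/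
def mixtureLaw (lam τ : ℝ) (μX : Measure ℝ) : Measure ℝ :=
  μX.bind fun x =>
    (poissonMeasure (Real.toNNReal (x * lam * τ / (1 - τ)))).bind fun k =>
      if k = 0 then Measure.dirac 0 else gammaMeasure k (lam * τ / (1 - τ))

/-- Law of the gamma smart path `X_τ = (1-τ)·γ(α,λ) + τ·Y(τ,X,λ)`, where
`γ(α,λ)` is an independent Gamma(α,λ) random variable. -/
def smartLaw (α lam τ : ℝ) (μX : Measure ℝ) : Measure ℝ :=
  Measure.conv ((gammaMeasure α lam).map (fun y => (1 - τ) * y))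
    ((mixtureLaw lam τ μX).map (fun y => τ * y))

open scoped ENNReal NNReal Nat BoundedContinuousFunction

namespace BoundedContinuousFunction

variable {E : Type*} [TopologicalSpace E]

lemma exists_eq_aeval_of_mem_adjoin {g f : E →ᵇ ℝ}
    (hf : f ∈ StarAlgebra.adjoin ℝ {g}) : ∃ q : Polynomial ℝ, f = Polynomial.aeval g q := by
  induction hf using StarAlgebra.adjoin_induction with
  | mem f hf => exact ⟨.X, by rw [hf, Polynomial.aeval_X]⟩
  | algebraMap r => exact ⟨.C r, by rw [Polynomial.aeval_C]⟩
  | add f f' _ _ hf hf' =>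
    obtain ⟨q, rfl⟩ := hf; obtain ⟨q', rfl⟩ := hf'; exact ⟨q + q', by rw [map_add]⟩
  | mul f f' _ _ hf hf' =>
    obtain ⟨q, rfl⟩ := hf; obtain ⟨q', rfl⟩ := hf'; exact ⟨q * q', by rw [map_mul]⟩
  | star f _ hf =>
    obtain ⟨q, rfl⟩ := hf; exact ⟨q, by ext x; simp⟩

lemma integral_aeval_eq_of_integral_pow_eq [MeasurableSpace E] [OpensMeasurableSpace E]
    {P Q : Measure E} [IsFiniteMeasure P] [IsFiniteMeasure Q] {g : E →ᵇ ℝ}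
    (h : ∀ n : ℕ, ∫ x, g x ^ n ∂P = ∫ x, g x ^ n ∂Q) (q : Polynomial ℝ) :
    ∫ x, Polynomial.aeval g q x ∂P = ∫ x, Polynomial.aeval g q x ∂Q := by
  have hint (μ : Measure E) [IsFiniteMeasure μ] (i : ℕ) :
      Integrable (fun x => q.coeff i * g x ^ i) μ :=
    ((g ^ i).integrable μ).const_mul _
  simp only [Polynomial.aeval_eq_sum_range, coe_sum, Finset.sum_apply, coe_smul, coe_pow,
    Pi.pow_apply, smul_eq_mul]
  rw [integral_finsetSum _ fun i _ => hint P i, integral_finsetSum _ fun i _ => hint Q i]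
  simp_rw [integral_const_mul, h]

end BoundedContinuousFunction

theorem MeasureTheory.Measure.ext_of_integral_pow_eq {E : Type*} [MeasurableSpace E]
    [PseudoEMetricSpace E] [BorelSpace E] [CompleteSpace E] [SecondCountableTopology E]
    {P Q : Measure E} [IsFiniteMeasure P] [IsFiniteMeasure Q] {g : E →ᵇ ℝ}
    (hg : Function.Injective g) (h : ∀ n : ℕ, ∫ x, g x ^ n ∂P = ∫ x, g x ^ n ∂Q) :
    P = Q := by
  refine ext_of_forall_mem_subalgebra_integral_eq_of_pseudoEMetric_complete_countable
    (A := StarAlgebra.adjoin ℝ {g}) ?_ fun f hf => ?_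
  · intro x y hxy
    exact ⟨_, ⟨_, ⟨g, StarAlgebra.subset_adjoin ℝ {g} rfl, rfl⟩, rfl⟩, hg.ne hxy⟩
  · obtain ⟨q, rfl⟩ := BoundedContinuousFunction.exists_eq_aeval_of_mem_adjoin hf
    exact BoundedContinuousFunction.integral_aeval_eq_of_integral_pow_eq h q

def laplaceTransform (μ : Measure ℝ) (t : ℝ) : ℝ≥0∞ :=
  ∫⁻ x, ENNReal.ofReal (rexp (-(t * x))) ∂μ

lemma laplaceTransform_zero (μ : Measure ℝ) : laplaceTransform μ 0 = μ univ := by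
  simp [laplaceTransform]

def expNegIci : Ici (0:ℝ) →ᵇ ℝ :=
  .mkOfBound ⟨fun x => rexp (-x), by fun_prop⟩ 1 fun x y => by
    have hx : rexp (-x) ≤ 1 := exp_le_one_iff.mpr (neg_nonpos.mpr x.2)
    have hy : rexp (-y) ≤ 1 := exp_le_one_iff.mpr (neg_nonpos.mpr y.2)
    simp only [ContinuousMap.coe_mk, Real.dist_eq, abs_le]
    constructor <;> linarith [exp_pos (-(x:ℝ)), exp_pos (-(y:ℝ))]

lemma expNegIci_apply_pow (x : Ici (0:ℝ)) (n : ℕ) : expNegIci x ^ n = rexp (-(n * x)) := by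
  rw [neg_mul_eq_mul_neg, exp_nat_mul]
  rfl

lemma injective_expNegIci : Function.Injective expNegIci := fun _ _ h =>
  Subtype.ext (neg_injective (exp_injective h))

theorem MeasureTheory.Measure.ext_of_laplaceTransform_eq {P Q : Measure ℝ} [IsFiniteMeasure P]
    (hP : P (Iio 0) = 0) (hQ : Q (Iio 0) = 0)
    (h : ∀ n : ℕ, laplaceTransform P n = laplaceTransform Q n) : P = Q := by
  have : IsFiniteMeasure Q := by
    have h0 := h 0
    rw [Nat.cast_zero, laplaceTransform_zero, laplaceTransform_zero] at h0
    exact ⟨h0 ▸ measure_lt_top P univ⟩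
  have : CompleteSpace (Ici (0:ℝ)) := isClosed_Ici.completeSpace_coe
  -- `projIci 0` moves both measures to `[0, ∞)` without changing them; there `exp (-x)` is
  -- bounded and injective.
  have hπ : Measurable (projIci (0:ℝ)) := (measurable_const.max measurable_id).subtype_mk
  have hmap (μ : Measure ℝ) (hμ : μ (Iio 0) = 0) :
      (μ.map (projIci 0)).map Subtype.val = μ := by
    rw [Measure.map_map measurable_subtype_coe hπ]
    conv_rhs => rw [← Measure.map_id (μ := μ)]
    refine Measure.map_congr ?_
    filter_upwards [measure_eq_zero_iff_ae_notMem.mp hμ] with x (hx : ¬x < 0)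
    exact max_eq_right (not_lt.mp hx)
  rw [← hmap P hP, ← hmap Q hQ] at h ⊢
  congr 1
  refine ext_of_integral_pow_eq injective_expNegIci fun n => ?_
  have hn := h n
  rw [laplaceTransform, laplaceTransform,
    lintegral_map (by fun_prop) measurable_subtype_coe,
    lintegral_map (by fun_prop) measurable_subtype_coe] at hn
  simp only [expNegIci_apply_pow]
  rw [integral_eq_lintegral_of_nonneg_ae (ae_of_all _ fun _ => (exp_pos _).le) (by fun_prop),
    integral_eq_lintegral_of_nonneg_ae (ae_of_all _ fun _ => (exp_pos _).le) (by fun_prop), hn]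

lemma laplaceTransform_map_const_mul (μ : Measure ℝ) (c t : ℝ) :
    laplaceTransform (μ.map (c * ·)) t = laplaceTransform μ (t * c) := by
  rw [laplaceTransform, laplaceTransform, lintegral_map (by fun_prop) (measurable_const_mul c)]
  simp only [mul_assoc]

lemma laplaceTransform_conv (μ ν : Measure ℝ) [SFinite ν] (t : ℝ) :
    laplaceTransform (μ.conv ν) t = laplaceTransform μ t * laplaceTransform ν t := by
  rw [laplaceTransform, Measure.conv, lintegral_map (by fun_prop) measurable_add]
  simp_rw [mul_add, neg_add, exp_add, ENNReal.ofReal_mul (exp_pos _).le]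
  exact lintegral_prod_mul (f := fun x => ENNReal.ofReal (rexp (-(t * x))))
    (g := fun x => ENNReal.ofReal (rexp (-(t * x)))) (by fun_prop) (by fun_prop)

namespace MeasureTheory.Measure

lemma bind_apply_eq_zero {α β : Type*} [MeasurableSpace α] [MeasurableSpace β]
    {m : Measure α} {f : α → Measure β} {s : Set β} (hs : MeasurableSet s)
    (hf : AEMeasurable f m) (h : ∀ a, f a s = 0) : m.bind f s = 0 := by
  simp [bind_apply hs hf, h]

lemma map_const_mul_Iio_eq_zero {μ : Measure ℝ} {c : ℝ} (hc : 0 ≤ c) (hμ : μ (Iio 0) = 0) :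
    μ.map (c * ·) (Iio 0) = 0 := by
  rw [map_apply (measurable_const_mul c) measurableSet_Iio]
  refine measure_mono_null (fun y (hy : c * y < 0) => show y < 0 from ?_) hμ
  by_contra! hy0
  exact (mul_nonneg hc hy0).not_gt hy

lemma conv_Iio_eq_zero {μ ν : Measure ℝ} [SFinite ν] (hμ : μ (Iio 0) = 0)
    (hν : ν (Iio 0) = 0) : μ.conv ν (Iio 0) = 0 := by
  rw [conv, map_apply measurable_add measurableSet_Iio]
  refine measure_mono_null (t := Iio 0 ×ˢ univ ∪ univ ×ˢ Iio 0) ?_ (measure_union_null ?_ ?_)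
  · rintro ⟨x, y⟩ (hxy : x + y < 0)
    simp only [mem_union, mem_prod, mem_Iio, mem_univ, and_true, true_and]
    by_contra! h
    linarith [h.1, h.2]
  · rw [prod_prod, hμ, zero_mul]
  · rw [prod_prod, hν, mul_zero]

lemma map_Iio_eq_zero_of_nonneg {α : Type*} [MeasurableSpace α] (μ : Measure α)
    {F : α → ℝ} (hF : Measurable F) (h : ∀ x, 0 ≤ F x) : μ.map F (Iio 0) = 0 := by
  rw [map_apply hF measurableSet_Iio,
    eq_empty_of_forall_notMem fun x (hx : x ∈ F ⁻¹' Iio 0) => (h x).not_gt hx, measure_empty]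

end MeasureTheory.Measure

lemma gammaPDF_mul_exp_neg_mul {a r t : ℝ} (hr : 0 ≤ r) (hrt : 0 < r + t) (x : ℝ) :
    gammaPDF a r x * ENNReal.ofReal (rexp (-(t * x)))
      = ENNReal.ofReal ((r / (r + t)) ^ a) * gammaPDF a (r + t) x := by
  rcases lt_or_ge x 0 with hx | hx
  · simp [gammaPDF_of_neg hx]
  rw [gammaPDF_of_nonneg hx, gammaPDF_of_nonneg hx, ← ENNReal.ofReal_mul' (exp_pos _).le,
    ← ENNReal.ofReal_mul (by positivity), div_rpow hr hrt.le]
  congr 1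
  have hexp : rexp (-(r * x)) * rexp (-(t * x)) = rexp (-((r + t) * x)) := by
    rw [← exp_add]; ring_nf
  have hpow : (r + t) ^ a ≠ 0 := (rpow_pos_of_pos hrt a).ne'
  rw [← hexp]
  field_simp

lemma measurable_gammaPDF (a r : ℝ) : Measurable (gammaPDF a r) :=
  (measurable_gammaPDFReal a r).ennreal_ofReal

lemma laplaceTransform_gammaMeasure {a r t : ℝ} (ha : 0 < a) (hr : 0 ≤ r) (hrt : 0 < r + t) :
    laplaceTransform (gammaMeasure a r) t = ENNReal.ofReal ((r / (r + t)) ^ a) := by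
  rw [laplaceTransform, gammaMeasure,
    lintegral_withDensity_eq_lintegral_mul _ (measurable_gammaPDF a r) (by fun_prop)]
  simp_rw [Pi.mul_apply, gammaPDF_mul_exp_neg_mul hr hrt]
  rw [lintegral_const_mul _ (measurable_gammaPDF _ _),
    lintegral_gammaPDF_eq_one ha hrt, mul_one]

lemma gammaMeasure_Iio_eq_zero (a r : ℝ) : gammaMeasure a r (Iio 0) = 0 := by
  rw [gammaMeasure, withDensity_apply _ measurableSet_Iio]
  exact lintegral_gammaPDF_of_nonpos le_rfl

lemma measurable_poissonMeasure : Measurable poissonMeasure := by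
  refine Measure.measurable_of_measurable_coe _ fun s hs => ?_
  simp_rw [poissonMeasure, Measure.sum_apply _ hs, Measure.smul_apply, smul_eq_mul]
  exact Measurable.tsum fun k => by fun_prop

lemma lintegral_ofReal_pow_poissonMeasure (m : ℝ≥0) {s : ℝ} (hs : 0 ≤ s) :
    ∫⁻ k, ENNReal.ofReal (s ^ k) ∂poissonMeasure m
      = ENNReal.ofReal (rexp (-(m * (1 - s)))) := by
  have hsum : HasSum (fun k : ℕ => rexp (-m) * ((s * m) ^ k / k !))
      (rexp (-m) * rexp (s * m)) := by
    rw [exp_eq_exp_ℝ]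
    exact (NormedSpace.expSeries_div_hasSum_exp (s * (m : ℝ))).mul_left _
  have hterm (k : ℕ) : ENNReal.ofReal (s ^ k) * poissonMeasure m {k}
      = ENNReal.ofReal (rexp (-m) * ((s * m) ^ k / k !)) := by
    rw [poissonMeasure_singleton, ← ENNReal.ofReal_mul (by positivity)]
    congr 1
    ring
  rw [lintegral_countable', tsum_congr hterm,
    ← ENNReal.ofReal_tsum_of_nonneg (fun k => by positivity) hsum.summable, hsum.tsum_eq,
    ← exp_add]
  congr 2
  ring

/-- The explicit Dirac mass is needed because `gammaMeasure 0 r` is the zero measure. -/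
def poissonGammaMeasure (m : ℝ≥0) (r : ℝ) : Measure ℝ :=
  (poissonMeasure m).bind fun k => if k = 0 then Measure.dirac 0 else gammaMeasure k r

lemma measurable_poissonGammaMeasure (r : ℝ) : Measurable fun m => poissonGammaMeasure m r :=
  (Measure.measurable_bind' (measurable_of_countable _)).comp measurable_poissonMeasure

lemma isProbabilityMeasure_poissonGammaMeasure (m : ℝ≥0) {r : ℝ} (hr : 0 < r) :
    IsProbabilityMeasure (poissonGammaMeasure m r) := by
  refine isProbabilityMeasure_bind (measurable_of_countable _).aemeasurable
    (ae_of_all _ fun k => ?_)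
  split_ifs with hk
  · infer_instance
  · exact isProbabilityMeasure_gammaMeasure (by positivity) hr

lemma poissonGammaMeasure_Iio_eq_zero (m : ℝ≥0) (r : ℝ) :
    poissonGammaMeasure m r (Iio 0) = 0 := by
  refine Measure.bind_apply_eq_zero measurableSet_Iio (measurable_of_countable _).aemeasurable
    fun k => ?_
  split_ifs
  · simp
  · exact gammaMeasure_Iio_eq_zero _ _

lemma laplaceTransform_poissonGammaMeasure (m : ℝ≥0) {r t : ℝ} (hr : 0 ≤ r)
    (hrt : 0 < r + t) :
    laplaceTransform (poissonGammaMeasure m r) t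
      = ENNReal.ofReal (rexp (-(m * (t / (r + t))))) := by
  have hk (k : ℕ) : laplaceTransform (if k = 0 then Measure.dirac 0 else gammaMeasure k r) t
      = ENNReal.ofReal ((r / (r + t)) ^ k) := by
    split_ifs with hk0
    · simp [hk0, laplaceTransform]
    · rw [laplaceTransform_gammaMeasure (by positivity) hr hrt, rpow_natCast]
  rw [laplaceTransform, poissonGammaMeasure,
    Measure.lintegral_bind (measurable_of_countable _).aemeasurable (by fun_prop)]
  refine (lintegral_congr hk).trans ?_
  rw [lintegral_ofReal_pow_poissonMeasure m (by positivity)]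
  congr 3
  field_simp
  ring

section SmartPath

variable {lam τ : ℝ} {μX : Measure ℝ}

lemma mixtureLaw_eq_bind :
    mixtureLaw lam τ μX = μX.bind fun x =>
      poissonGammaMeasure (x * lam * τ / (1 - τ)).toNNReal (lam * τ / (1 - τ)) := rfl

lemma measurable_mixtureKernel : Measurable fun x : ℝ =>
    poissonGammaMeasure (x * lam * τ / (1 - τ)).toNNReal (lam * τ / (1 - τ)) :=
  (measurable_poissonGammaMeasure _).comp (by fun_prop)

lemma mixtureLaw_Iio_eq_zero : mixtureLaw lam τ μX (Iio 0) = 0 :=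
  Measure.bind_apply_eq_zero measurableSet_Iio (measurable_mixtureKernel).aemeasurable
    fun _ => poissonGammaMeasure_Iio_eq_zero _ _

lemma isProbabilityMeasure_mixtureLaw (hlam : 0 < lam) (hτ : τ ∈ Ioo (0:ℝ) 1)
    [IsProbabilityMeasure μX] : IsProbabilityMeasure (mixtureLaw lam τ μX) := by
  have hr : 0 < lam * τ / (1 - τ) := div_pos (mul_pos hlam hτ.1) (sub_pos.mpr hτ.2)
  exact isProbabilityMeasure_bind (measurable_mixtureKernel).aemeasurable
    (ae_of_all _ fun _ => isProbabilityMeasure_poissonGammaMeasure _ hr)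

lemma laplaceTransform_mixtureLaw (hlam : 0 < lam) (hτ : τ ∈ Ioo (0:ℝ) 1) {t : ℝ}
    (ht : 0 ≤ t) (hX : μX (Iio 0) = 0) :
    laplaceTransform (mixtureLaw lam τ μX) t =
      ∫⁻ x, ENNReal.ofReal (rexp (-(t * lam * τ * x / (lam * τ + t * (1 - τ))))) ∂μX := by
  obtain ⟨hτ0, hτ1⟩ := hτ
  have h1τ : 0 < 1 - τ := sub_pos.mpr hτ1
  rw [laplaceTransform, mixtureLaw_eq_bind,
    Measure.lintegral_bind (measurable_mixtureKernel).aemeasurable (by fun_prop)]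
  refine lintegral_congr_ae ?_
  filter_upwards [measure_eq_zero_iff_ae_notMem.mp hX] with x (hx : ¬x < 0)
  rw [← laplaceTransform, laplaceTransform_poissonGammaMeasure _ (by positivity) (by positivity),
    coe_toNNReal _ (div_nonneg (by have := not_lt.mp hx; positivity) h1τ.le)]
  congr 2
  field_simp

lemma smartLaw_Iio_eq_zero (hlam : 0 < lam) (hτ : τ ∈ Ioo (0:ℝ) 1) [IsProbabilityMeasure μX]
    (α : ℝ) : smartLaw α lam τ μX (Iio 0) = 0 := by
  have := isProbabilityMeasure_mixtureLaw (μX := μX) hlam hτ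
  exact Measure.conv_Iio_eq_zero
    (Measure.map_const_mul_Iio_eq_zero (sub_pos.mpr hτ.2).le (gammaMeasure_Iio_eq_zero _ _))
    (Measure.map_const_mul_Iio_eq_zero hτ.1.le mixtureLaw_Iio_eq_zero)

lemma laplaceTransform_smartLaw {α : ℝ} (hα : 0 < α) (hlam : 0 < lam)
    (hτ : τ ∈ Ioo (0:ℝ) 1) [IsProbabilityMeasure μX] {t : ℝ} (ht : 0 ≤ t)
    (hX : μX (Iio 0) = 0) :
    laplaceTransform (smartLaw α lam τ μX) t
      = ENNReal.ofReal ((lam / (lam + t * (1 - τ))) ^ α)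
        * ∫⁻ x, ENNReal.ofReal (rexp (-(t * τ * lam * x / (lam + t * (1 - τ))))) ∂μX := by
  have := isProbabilityMeasure_mixtureLaw (μX := μX) hlam hτ
  have h1τ : 0 < 1 - τ := sub_pos.mpr hτ.2
  rw [smartLaw, laplaceTransform_conv, laplaceTransform_map_const_mul,
    laplaceTransform_map_const_mul, laplaceTransform_gammaMeasure hα hlam.le (by positivity),
    laplaceTransform_mixtureLaw hlam hτ (by positivity [hτ.1]) hX]
  congr 3 with x
  field_simp [hτ.1.ne']

end SmartPath

lemma gaussianPDF_mul_exp_neg_mul_sq {a c t : ℝ} (ht : 0 ≤ t) (z : ℝ) :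
    gaussianPDF 0 1 z * ENNReal.ofReal (rexp (-(t * (a + c * z) ^ 2)))
      = ENNReal.ofReal ((1 + 2 * t * c ^ 2)⁻¹ ^ (1 / 2 : ℝ)
          * rexp (-(t * a ^ 2 / (1 + 2 * t * c ^ 2))))
        * gaussianPDF (-(2 * t * a * c / (1 + 2 * t * c ^ 2)))
            (1 + 2 * t * c ^ 2)⁻¹.toNNReal z := by
  set β := 1 + 2 * t * c ^ 2 with hβ
  have hβ0 : 0 < β := by positivity
  rw [gaussianPDF, gaussianPDF, ← ENNReal.ofReal_mul (gaussianPDFReal_nonneg _ _ _),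
    ← ENNReal.ofReal_mul (by positivity), gaussianPDFReal, gaussianPDFReal,
    coe_toNNReal _ (inv_nonneg.mpr hβ0.le), NNReal.coe_one]
  congr 1
  rw [mul_assoc _ (rexp _), ← exp_add, mul_mul_mul_comm, ← exp_add]
  congr 1
  · rw [← sqrt_eq_rpow, mul_one, sqrt_mul (by positivity : (0:ℝ) ≤ 2 * π)]
    have : 0 < √β⁻¹ := sqrt_pos.mpr (by positivity)
    field_simp
  · congr 1
    field_simp
    rw [hβ]
    ring

lemma lintegral_exp_neg_mul_sq_gaussianReal {a c t : ℝ} (ht : 0 ≤ t) :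
    ∫⁻ z, ENNReal.ofReal (rexp (-(t * (a + c * z) ^ 2))) ∂gaussianReal 0 1
      = ENNReal.ofReal ((1 + 2 * t * c ^ 2)⁻¹ ^ (1 / 2 : ℝ)
          * rexp (-(t * a ^ 2 / (1 + 2 * t * c ^ 2)))) := by
  have hv : (1 + 2 * t * c ^ 2)⁻¹.toNNReal ≠ 0 := by
    rw [ne_eq, toNNReal_eq_zero, not_le]; positivity
  rw [gaussianReal_of_var_ne_zero 0 one_ne_zero,
    lintegral_withDensity_eq_lintegral_mul _ (measurable_gaussianPDF 0 1) (by fun_prop)]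
  simp_rw [Pi.mul_apply, gaussianPDF_mul_exp_neg_mul_sq ht]
  rw [lintegral_const_mul _ (measurable_gaussianPDF _ _), lintegral_gaussianPDF_eq_one _ hv,
    mul_one]

lemma lintegral_fintype_prod_eq_pow {ι E : Type*} [Fintype ι] [MeasurableSpace E]
    (μ : Measure E) [IsProbabilityMeasure μ] {f : E → ℝ≥0∞} (hf : Measurable f) :
    ∫⁻ x : ι → E, ∏ i, f (x i) ∂Measure.pi (fun _ => μ)
      = (∫⁻ y, f y ∂μ) ^ Fintype.card ι := by
  rw [lintegral_prod_eq_prod_lintegral_of_indepFun _ _ (iIndepFun_pi fun _ => hf.aemeasurable)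
    fun i => hf.comp (measurable_pi_apply i), ← Finset.card_univ, ← Finset.prod_const]
  exact Finset.prod_congr rfl fun i _ => (measurePreserving_eval _ i).lintegral_comp hf

lemma laplaceTransform_map_sum_sq {Ω ι : Type*} [MeasurableSpace Ω] [Fintype ι]
    (μ : Measure Ω) [SFinite μ] {A : Ω → ℝ} (hA : Measurable A) (c : ℝ) {t : ℝ}
    (ht : 0 ≤ t) :
    laplaceTransform ((μ.prod (Measure.pi fun _ : ι => gaussianReal 0 1)).map
        fun q => ∑ i, (A q.1 + c * q.2 i) ^ 2) t
      = ∫⁻ ω, ENNReal.ofReal ((1 + 2 * t * c ^ 2)⁻¹ ^ (1 / 2 : ℝ)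
          * rexp (-(t * A ω ^ 2 / (1 + 2 * t * c ^ 2)))) ^ Fintype.card ι ∂μ := by
  have hF : Measurable fun q : Ω × (ι → ℝ) => ∑ i, (A q.1 + c * q.2 i) ^ 2 := by fun_prop
  rw [laplaceTransform, lintegral_map (by fun_prop) hF, lintegral_prod _ (by fun_prop)]
  refine lintegral_congr fun ω => ?_
  simp_rw [Finset.mul_sum, ← Finset.sum_neg_distrib, exp_sum,
    ENNReal.ofReal_prod_of_nonneg fun i _ => (exp_pos _).le]
  rw [lintegral_fintype_prod_eq_pow
    (f := fun z => ENNReal.ofReal (rexp (-(t * (A ω + c * z) ^ 2)))) _ (by fun_prop),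
    lintegral_exp_neg_mul_sq_gaussianReal ht]

lemma laplaceTransform_chiSquaredRep {p : ℕ} (hp : 0 < p) {lam τ : ℝ} (hlam : 0 < lam)
    (hτ : τ ∈ Ioo (0:ℝ) 1) {μX : Measure ℝ} [SFinite μX] {t : ℝ} (ht : 0 ≤ t)
    (hX : μX (Iio 0) = 0) :
    laplaceTransform (Measure.map
        (fun q : ℝ × (Fin p → ℝ) =>
          ∑ i, (Real.sqrt τ * Real.sqrt (q.1 / p) +
                Real.sqrt ((1 - τ) / (2 * lam)) * q.2 i) ^ 2)
        (μX.prod (Measure.pi fun _ : Fin p => gaussianReal 0 1))) t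
      = ENNReal.ofReal ((lam / (lam + t * (1 - τ))) ^ ((p : ℝ) / 2))
        * ∫⁻ x, ENNReal.ofReal (rexp (-(t * τ * lam * x / (lam + t * (1 - τ))))) ∂μX := by
  have h1τ : 0 < 1 - τ := sub_pos.mpr hτ.2
  have hβ : 1 + 2 * t * √((1 - τ) / (2 * lam)) ^ 2 = (lam + t * (1 - τ)) / lam := by
    rw [sq_sqrt (by positivity)]
    field_simp
  rw [laplaceTransform_map_sum_sq μX (A := fun x => √τ * √(x / p)) (by fun_prop) _ ht,
    Fintype.card_fin, hβ, inv_div, ← lintegral_const_mul _ (by fun_prop)]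
  refine lintegral_congr_ae ?_
  filter_upwards [measure_eq_zero_iff_ae_notMem.mp hX] with x (hx : ¬x < 0)
  have ha : (√τ * √(x / p)) ^ 2 = τ * x / p := by
    rw [mul_pow, sq_sqrt hτ.1.le, sq_sqrt (div_nonneg (not_lt.mp hx) p.cast_nonneg), mul_div]
  rw [← ENNReal.ofReal_pow (by positivity), ← ENNReal.ofReal_mul (by positivity), ha, mul_pow,
    ← rpow_natCast, ← rpow_mul (by positivity), ← exp_nat_mul]
  congr 3
  · ring
  · field_simp

/-- For `α = p/2`, the gamma smart path has the distributional representation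
`X_τ = Σᵢ (√τ·√(X/p) + √((1-τ)/(2λ))·Z_i)²` with `Z₁,…,Z_p` i.i.d. standard
Gaussians independent of `X`. -/
theorem smartLaw_chiSquared_rep (p : ℕ) (hp : 0 < p) (lam τ : ℝ) (hlam : 0 < lam)
    (hτ : τ ∈ Ioo (0:ℝ) 1) (μX : Measure ℝ) [IsProbabilityMeasure μX]
    (hXpos : μX (Iic 0) = 0) :
    smartLaw ((p : ℝ) / 2) lam τ μX =
      Measure.map
        (fun q : ℝ × (Fin p → ℝ) =>
          ∑ i, (Real.sqrt τ * Real.sqrt (q.1 / p) +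
                Real.sqrt ((1 - τ) / (2 * lam)) * q.2 i) ^ 2)
        (μX.prod (Measure.pi fun _ : Fin p => gaussianReal 0 1)) := by
  have hX : μX (Iio 0) = 0 := measure_mono_null Iio_subset_Iic_self hXpos
  refine (Measure.ext_of_laplaceTransform_eq
    (Measure.map_Iio_eq_zero_of_nonneg _ (by fun_prop) fun q => by positivity)
    (smartLaw_Iio_eq_zero hlam hτ _) fun n => ?_).symm
  rw [laplaceTransform_chiSquaredRep hp hlam hτ n.cast_nonneg hX,
    laplaceTransform_smartLaw (by positivity) hlam hτ n.cast_nonneg hX]
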